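/- Let ∇ be a torsion-free affine connection on M with Riemannian extension G^c on T*M. Then for any vector fields X, Y on M, the G^c-gradient of the momentum function V^X evaluated on V^Y equals the momentum function of the symmetric product: (grad_{G^c} V^X)(V^Y) = V^{⟨X:Y⟩}. -/

import Mathlib

open scoped BigOperators
noncomputable section

/-- Points of the coordinate model of an `n`-manifold. -/
abbrev Pt (n : ℕ) : Type := Fin n → ℝ
/-- Vector fields in coordinates. -/
abbrev VF (n : ℕ) : Type := Pt n → Pt n
/-- Christoffel symbols `Γ x a b c = Γ^a_{bc}(x)` of an affine connection. -/
abbrev Chr (n : ℕ) : Type := Pt n → Fin n → Fin n → Fin n → ℝ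

/-- Partial derivative `∂f/∂x^b` at `x`. -/
def pd {n : ℕ} (f : Pt n → ℝ) (b : Fin n) (x : Pt n) : ℝ :=
  fderiv ℝ f x (Pi.single b 1)

/-- Lie derivative of a function along a vector field, `X f`. -/
def dirDer {n : ℕ} (X : VF n) (f : Pt n → ℝ) : Pt n → ℝ :=
  fun x => ∑ b, X x b * pd f b x

/-- Covariant derivative `∇_X Y` of the connection with Christoffel symbols `Γ`. -/
def nabla {n : ℕ} (Γ : Chr n) (X Y : VF n) : VF n :=
  fun x a => (∑ b, X x b * pd (fun y => Y y a) b x) + ∑ b, ∑ c, Γ x a b c * X x b * Y x c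

/-- Symmetric product `⟨X : Y⟩ = ∇_X Y + ∇_Y X`. -/
def symProd {n : ℕ} (Γ : Chr n) (X Y : VF n) : VF n :=
  fun x a => nabla Γ X Y x a + nabla Γ Y X x a

/-- Lie bracket `[X, Y]` in coordinates. -/
def lieBr {n : ℕ} (X Y : VF n) : VF n :=
  fun x a => (∑ b, X x b * pd (fun y => Y y a) b x) - ∑ b, Y x b * pd (fun y => X y a) b x

/-- Smoothness of a vector field (componentwise). -/
def SmoothVF {n : ℕ} (X : VF n) : Prop := ∀ a, ContDiff ℝ (⊤ : ℕ∞) (fun x => X x a)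

/-- Torsion-free connection: Christoffel symbols symmetric in the lower indices. -/
def TorsionFree {n : ℕ} (Γ : Chr n) : Prop := ∀ x a b c, Γ x a b c = Γ x a c b

/-- Smoothness of the Christoffel symbols. -/
def SmoothChr {n : ℕ} (Γ : Chr n) : Prop := ∀ a b c, ContDiff ℝ (⊤ : ℕ∞) (fun x => Γ x a b c)

/-- Points of the (co)tangent bundle in coordinates: `(x, v)` resp. `(x, p)`. -/
abbrev TPt (n : ℕ) : Type := Pt n × Pt n

/-- Complete lift of a function to `TM`: `f^c(x,v) = ⟨df(x), v⟩`. -/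
def fc {n : ℕ} (f : Pt n → ℝ) : TPt n → ℝ := fun q => ∑ a, pd f a q.1 * q.2 a

/-- Vertical lift of a function to `TM` (or `T*M`): `f^v = f ∘ pr₁`. -/
def fvT {n : ℕ} (f : Pt n → ℝ) : TPt n → ℝ := fun q => f q.1

/-- Complete lift of a vector field to `TM` in coordinates. -/
def completeLift {n : ℕ} (X : VF n) : TPt n → TPt n :=
  fun q => (X q.1, fun a => ∑ b, pd (fun y => X y a) b q.1 * q.2 b)

/-- Vertical lift of a vector field to `TM`. -/
def verticalLift {n : ℕ} (X : VF n) : TPt n → TPt n := fun q => (0, X q.1)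

/-- Action of a vector field on the double space on a function. -/
def vfApply {n : ℕ} (Z : TPt n → TPt n) (F : TPt n → ℝ) : TPt n → ℝ :=
  fun q => fderiv ℝ F q (Z q)

/-- Momentum function `V^X(x,p) = ⟨p, X(x)⟩` on `T*M`. -/
def momF {n : ℕ} (X : VF n) : TPt n → ℝ := fun q => ∑ a, q.2 a * X q.1 a

/-- Partial derivative of a function on `T*M` in the `x^a` direction. -/
def pdX {n : ℕ} (F : TPt n → ℝ) (a : Fin n) (q : TPt n) : ℝ :=
  fderiv ℝ F q (Pi.single a 1, 0)

/-- Partial derivative of a function on `T*M` in the `p_a` direction. -/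
def pdP {n : ℕ} (F : TPt n → ℝ) (a : Fin n) (q : TPt n) : ℝ :=
  fderiv ℝ F q (0, Pi.single a 1)

/-- Gradient w.r.t. the Riemannian extension `G^c` of a torsion-free connection `Γ`,
computed with the inverse metric matrix `[[0, I], [I, 2 p_a Γ^a_{bc}]]`. -/
def gradGc {n : ℕ} (Γ : Chr n) (F : TPt n → ℝ) : TPt n → TPt n :=
  fun q => (fun a => pdP F a q,
    fun b => pdX F b q + 2 * ∑ a, ∑ c, q.2 a * Γ q.1 a b c * pdP F c q)

/-- The musical isomorphism `♭_G : TM → T*M`, `(x,v) ↦ (x, G(x)v)`. -/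
def flatG {n : ℕ} (G : Pt n → Matrix (Fin n) (Fin n) ℝ) : TPt n → TPt n :=
  fun q => (q.1, fun a => ∑ b, G q.1 a b * q.2 b)

/-- The Riemannian extension metric `G^c` on `T*M`, with matrix
`[[−2 p_c Γ^c_{ab}, I], [I, 0]]`, evaluated on two tangent vectors `u, w` at `q`. -/
def gcPair {n : ℕ} (Γ : Chr n) (q : TPt n) (u w : TPt n) : ℝ :=
  (∑ a, ∑ b, (-(2 * ∑ c, q.2 c * Γ q.1 c a b)) * u.1 a * w.1 b)
    + (∑ a, u.1 a * w.2 a) + ∑ a, u.2 a * w.1 a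

lemma clm_pi_apply {n : ℕ} (L : (Fin n → ℝ) →L[ℝ] ℝ) (v : Fin n → ℝ) :
    L v = ∑ b, v b * L (Pi.single b 1) := by
  have hv : v = ∑ b, v b • (Pi.single b 1 : Fin n → ℝ) := by
    funext j
    simp [Finset.sum_apply, Pi.single_apply]
  conv_lhs => rw [hv]
  simp [map_sum, smul_eq_mul]

lemma hasFDerivAt_momF {n : ℕ} (X : VF n) (hX : SmoothVF X) (q : TPt n) :
    HasFDerivAt (momF X)
      (∑ a : Fin n, ((q.2 a) • ((fderiv ℝ (fun x => X x a) q.1).comp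
          (ContinuousLinearMap.fst ℝ (Pt n) (Pt n)))
        + (X q.1 a) • ((ContinuousLinearMap.proj a).comp
          (ContinuousLinearMap.snd ℝ (Pt n) (Pt n))))) q := by
  apply HasFDerivAt.fun_sum
  intro a _
  have h1 : HasFDerivAt (fun q : TPt n => q.2 a)
      ((ContinuousLinearMap.proj a).comp (ContinuousLinearMap.snd ℝ (Pt n) (Pt n))) q :=
    ((ContinuousLinearMap.proj a).comp (ContinuousLinearMap.snd ℝ (Pt n) (Pt n))).hasFDerivAt
  have h2 : HasFDerivAt (fun q : TPt n => X q.1 a)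
      ((fderiv ℝ (fun x => X x a) q.1).comp (ContinuousLinearMap.fst ℝ (Pt n) (Pt n))) q := by
    exact (((hX a).differentiable (by simp) q.1).hasFDerivAt).comp q
      (ContinuousLinearMap.fst ℝ (Pt n) (Pt n)).hasFDerivAt
  exact h1.mul h2

lemma fderiv_momF_apply {n : ℕ} (X : VF n) (hX : SmoothVF X) (q : TPt n) (v : TPt n) :
    fderiv ℝ (momF X) q v
      = ∑ a, (q.2 a * fderiv ℝ (fun x => X x a) q.1 v.1 + X q.1 a * v.2 a) := by
  rw [(hasFDerivAt_momF X hX q).fderiv]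
  simp [ContinuousLinearMap.sum_apply, ContinuousLinearMap.smul_apply, smul_eq_mul]

lemma alg {n : ℕ} (q X1 Y1 : Fin n → ℝ) (dX dY : Fin n → Fin n → ℝ)
    (G : Fin n → Fin n → Fin n → ℝ) (hG : ∀ a b c, G a b c = G a c b) :
    ∑ a, (q a * (∑ b, X1 b * dY a b)
        + Y1 a * ((∑ c, q c * dX c a) + 2 * ∑ c, ∑ e, q c * G c a e * X1 e))
    = ∑ a, q a * ((∑ b, X1 b * dY a b) + (∑ b, ∑ c, G a b c * X1 b * Y1 c)
        + ((∑ b, Y1 b * dX a b) + ∑ b, ∑ c, G a b c * Y1 b * X1 c)) := by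
  set T := ∑ a, ∑ b, ∑ c, q a * G a b c * Y1 b * X1 c with hT
  have hB : ∑ a, Y1 a * (∑ c, q c * dX c a) = ∑ a, q a * ∑ b, Y1 b * dX a b := by
    simp only [Finset.mul_sum]
    rw [Finset.sum_comm]
    exact Finset.sum_congr rfl fun a _ => Finset.sum_congr rfl fun b _ => by ring
  have hC : ∑ a, Y1 a * (2 * ∑ c, ∑ e, q c * G c a e * X1 e) = 2 * T := by
    calc ∑ a, Y1 a * (2 * ∑ c, ∑ e, q c * G c a e * X1 e)
        = ∑ a, ∑ c, ∑ e, 2 * (q c * G c a e * Y1 a * X1 e) := by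
          refine Finset.sum_congr rfl fun a _ => ?_
          simp only [Finset.mul_sum]
          exact Finset.sum_congr rfl fun c _ => Finset.sum_congr rfl fun e _ => by ring
      _ = ∑ c, ∑ a, ∑ e, 2 * (q c * G c a e * Y1 a * X1 e) := Finset.sum_comm
      _ = 2 * T := by
          rw [hT]
          simp only [Finset.mul_sum]
  have hD : ∑ a, q a * (∑ b, ∑ c, G a b c * X1 b * Y1 c) = T := by
    rw [hT]
    refine Finset.sum_congr rfl fun a _ => ?_
    rw [Finset.mul_sum]
    calc ∑ b, q a * ∑ c, G a b c * X1 b * Y1 c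
        = ∑ b, ∑ c, q a * G a c b * Y1 c * X1 b := by
          refine Finset.sum_congr rfl fun b _ => ?_
          rw [Finset.mul_sum]
          exact Finset.sum_congr rfl fun c _ => by rw [hG a b c]; ring
      _ = ∑ b, ∑ c, q a * G a b c * Y1 b * X1 c := Finset.sum_comm
  have hE : ∑ a, q a * (∑ b, ∑ c, G a b c * Y1 b * X1 c) = T := by
    rw [hT]
    refine Finset.sum_congr rfl fun a _ => ?_
    rw [Finset.mul_sum]
    refine Finset.sum_congr rfl fun b _ => ?_
    rw [Finset.mul_sum]
    exact Finset.sum_congr rfl fun c _ => by ring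
  simp only [mul_add, Finset.sum_add_distrib]
  rw [hB, hC, hD, hE]
  ring

/-- `(grad_{G^c} V^X)(V^Y) = V^{⟨X:Y⟩}` for the Riemannian extension of a
torsion-free affine connection. -/
theorem gradGc_momF_apply_momF {n : ℕ} (Γ : Chr n) (X Y : VF n)
    (hΓ : TorsionFree Γ) (hΓs : SmoothChr Γ) (hX : SmoothVF X) (hY : SmoothVF Y) :
    ∀ q : TPt n, fderiv ℝ (momF Y) q (gradGc Γ (momF X) q) = momF (symProd Γ X Y) q := by
  intro q
  have hpdP : ∀ a, pdP (momF X) a q = X q.1 a := by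
    intro a
    rw [pdP, fderiv_momF_apply X hX q]
    simp [Pi.single_apply, mul_ite, Finset.sum_ite_eq']
  have hpdX : ∀ b, pdX (momF X) b q = ∑ c, q.2 c * pd (fun y => X y c) b q.1 := by
    intro b
    rw [pdX, fderiv_momF_apply X hX q]
    simp [pd]
  have hv1 : (gradGc Γ (momF X) q).1 = X q.1 := funext hpdP
  rw [fderiv_momF_apply Y hY q]
  have key : ∀ a, fderiv ℝ (fun x => Y x a) q.1 (gradGc Γ (momF X) q).1
      = ∑ b, X q.1 b * pd (fun y => Y y a) b q.1 := fun a => by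
    rw [hv1, clm_pi_apply]; rfl
  have halg := alg q.2 (X q.1) (Y q.1) (fun c a => pd (fun y => X y c) a q.1)
    (fun a b => pd (fun y => Y y a) b q.1) (fun a b c => Γ q.1 a b c)
    (fun a b c => hΓ q.1 a b c)
  simp only [momF, symProd, nabla]
  rw [← halg]
  refine Finset.sum_congr rfl fun a _ => ?_
  rw [key a]
  simp only [gradGc, hpdX a, hpdP]
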